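/- Let G be a finite abelian group, S ⊆ G, and suppose subgroups L ≤ G₀ ≤ G and an element g₀ ∈ G₀ satisfy: |G₀/L| is even and greater than 2, and S + L = (G ∖ G₀) ∪ (g₀ + L). Then the vertex connectivity of Cay⁺(S) is at most |S+L| − |L|. -/

import Mathlib

/-!
Removing the `|G ∖ G₀| = |S + L| - |L|` vertices outside `G₀` leaves the
induced graph on `G₀`. Inside `G₀` every element of `S` lies in the coset `g₀ + L`, so the union
`L ∪ (g₀ + L)` of two `L`-cosets is closed under `Cay⁺(S)`-adjacency within `G₀`: in `G₀ / L`,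
`a + b = g₀` with `a ∈ {0, g₀}` forces `b ∈ {g₀, 0}`. Since `|G₀ / L| > 2`, this union is a proper
subset of `G₀`, so the induced graph on `G₀` is disconnected.
-/

open Pointwise

/-- The addition Cayley graph induced by `S` on `G`. -/
def addCayley {G : Type*} [AddCommGroup G] (S : Set G) : SimpleGraph G where
  Adj a b := a ≠ b ∧ a + b ∈ S
  symm := by
    constructor
    intro a b h
    exact ⟨h.1.symm, by rw [add_comm]; exact h.2⟩
  loopless := by
    constructor
    intro a h
    exact h.1 rfl

/-- The vertex connectivity of a graph: the least number of vertices whose removal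
disconnects the graph or leaves at most one vertex. -/
noncomputable def vertexConnectivity {V : Type*} (Γ : SimpleGraph V) : ℕ :=
  sInf {k | ∃ s : Set V, s.ncard = k ∧
    ((sᶜ : Set V).ncard ≤ 1 ∨ ¬ (Γ.induce (sᶜ : Set V)).Connected)}

theorem vertexConnectivity_le_ncard_of_not_connected {V : Type*} (Γ : SimpleGraph V) (s : Set V)
    (h : ¬ (Γ.induce sᶜ).Connected) : vertexConnectivity Γ ≤ s.ncard :=
  Nat.sInf_le ⟨s, rfl, Or.inr h⟩

namespace SimpleGraph

variable {V : Type*} (Γ : SimpleGraph V)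

theorem not_connected_induce_of_adj_closed {T A : Set V} {u v : V} (huT : u ∈ T) (huA : u ∈ A)
    (hvT : v ∈ T) (hvA : v ∉ A) (hA : ∀ a ∈ A, ∀ b ∈ T, Γ.Adj a b → b ∈ A) :
    ¬ (Γ.induce T).Connected := by
  intro hconn
  have hwalk : ∀ {x y : T}, (Γ.induce T).Walk x y → (x : V) ∈ A → (y : V) ∈ A := by
    intro x y w
    induction w with
    | nil => exact id
    | cons hadj _ ih => exact fun hx => ih (hA _ hx _ (Subtype.prop _) hadj)
  obtain ⟨w⟩ := hconn.preconnected ⟨u, huT⟩ ⟨v, hvT⟩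
  exact hvA (hwalk w huA)

end SimpleGraph

section Cosets

variable {G : Type*} [AddCommGroup G] (L : AddSubgroup G)

theorem mem_singleton_add_iff_mk_eq {g x : G} :
    x ∈ {g} + (L : Set G) ↔ (x : G ⧸ L) = g := by
  rw [Set.singleton_add, eq_comm, QuotientAddGroup.eq]
  constructor
  · rintro ⟨l, hl, rfl⟩
    simpa using hl
  · exact fun h => ⟨-g + x, h, add_neg_cancel_left g x⟩

theorem ncard_singleton_add (g : G) (s : Set G) : ({g} + s).ncard = s.ncard := by
  rw [Set.singleton_add, Set.ncard_image_of_injective _ (add_right_injective g)]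

theorem mem_union_coset_of_add_mem_coset {g a b : G} (ha : a ∈ (L : Set G) ∪ ({g} + L))
    (hab : a + b ∈ {g} + (L : Set G)) : b ∈ (L : Set G) ∪ ({g} + L) := by
  simp only [Set.mem_union, SetLike.mem_coe, mem_singleton_add_iff_mk_eq,
    ← QuotientAddGroup.eq_zero_iff, QuotientAddGroup.mk_add] at ha hab ⊢
  rcases ha with ha | ha
  · exact Or.inr (by simpa [ha] using hab)
  · exact Or.inl (by simpa [ha] using hab)

theorem ncard_union_coset_lt [Finite G] (G₀ : AddSubgroup G) (g : G) {n : ℕ}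
    (hn : Nat.card G₀ = n * Nat.card L) (hn2 : 2 < n) :
    ((L : Set G) ∪ ({g} + L)).ncard < (G₀ : Set G).ncard := by
  have hL : 0 < (L : Set G).ncard := (Set.ncard_pos (Set.toFinite _)).mpr ⟨0, L.zero_mem⟩
  have hG₀ : (G₀ : Set G).ncard = n * (L : Set G).ncard := by
    rw [← Nat.card_coe_set_eq, ← Nat.card_coe_set_eq]
    exact hn
  calc ((L : Set G) ∪ ({g} + L)).ncard ≤ (L : Set G).ncard + ({g} + (L : Set G)).ncard :=
        Set.ncard_union_le _ _
    _ = 2 * (L : Set G).ncard := by rw [ncard_singleton_add, two_mul]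
    _ < (G₀ : Set G).ncard := hG₀ ▸ Nat.mul_lt_mul_of_pos_right hn2 hL

end Cosets

/-- If `L ≤ G₀ ≤ G`, `g₀ ∈ G₀`, `|G₀/L|` is even and greater than `2`, and
`S + L = (G ∖ G₀) ∪ (g₀ + L)`, then `κ(Cay⁺(S)) ≤ |S+L| − |L|`. -/
theorem kappa_le_of_L {G : Type*} [AddCommGroup G] [Fintype G]
    (S : Set G) (L G₀ : AddSubgroup G) (hLG₀ : L ≤ G₀) (g₀ : G) (hg₀ : g₀ ∈ G₀)
    (hindex : ∃ n : ℕ, Nat.card G₀ = n * Nat.card L ∧ Even n ∧ 2 < n)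
    (hSL : S + (L : Set G) = (Set.univ \ (G₀ : Set G)) ∪ ({g₀} + (L : Set G))) :
    vertexConnectivity (addCayley S) ≤ (S + (L : Set G)).ncard - (L : Set G).ncard := by
  obtain ⟨n, hn, -, hn2⟩ := hindex
  set A : Set G := (L : Set G) ∪ ({g₀} + L)
  have hcoset : {g₀} + (L : Set G) ⊆ G₀ := by
    rintro x ⟨_, rfl, l, hl, rfl⟩
    exact G₀.add_mem hg₀ (hLG₀ hl)
  have hcard : (S + (L : Set G)).ncard - (L : Set G).ncard = ((G₀ : Set G)ᶜ).ncard := by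
    rw [hSL, ← Set.compl_eq_univ_sdiff,
      Set.ncard_union_eq (Set.disjoint_compl_left_iff_subset.mpr hcoset), ncard_singleton_add,
      Nat.add_sub_cancel]
  obtain ⟨x, hxG₀, hxA⟩ := Set.exists_mem_notMem_of_ncard_lt_ncard
    (ncard_union_coset_lt L G₀ g₀ hn hn2)
  have hclosed : ∀ a ∈ A, ∀ b ∈ (G₀ : Set G), (addCayley S).Adj a b → b ∈ A := by
    intro a ha b hb hab
    have hsum : a + b ∈ S + (L : Set G) := Set.subset_add_left S L.zero_mem hab.2
    rw [hSL] at hsum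
    refine mem_union_coset_of_add_mem_coset L ha (hsum.resolve_left fun h => h.2 ?_)
    exact G₀.add_mem (ha.elim (fun h => hLG₀ h) (fun h => hcoset h)) hb
  rw [hcard]
  refine vertexConnectivity_le_ncard_of_not_connected _ _ ?_
  rw [compl_compl]
  exact (addCayley S).not_connected_induce_of_adj_closed G₀.zero_mem (Or.inl L.zero_mem) hxG₀ hxA
    hclosed
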